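/- arXiv:math/0507575 — 5 statements merged into one kernel-verified Lean document; each statement's English description precedes it below -/
import Mathlib

section
/- Let x₀, β, γ, λ, μ, τ > 0 and suppose λβτ/γ > (μ + βx₀)². Then the point (U*, V*, P*) with U* = (λβτ − γ(μ+βx₀)²)/(μτ(μ+2βx₀)), V* = (μ+βx₀)²/(βτ), P* = (λβτ − γ(μ+βx₀)²)/(βμτ) is an equilibrium of the ODE system U' = βP − μU − 2βx₀U, V' = λ − γV − τUV + βx₀²U, P' = τUV − μP − βx₀²U, and satisfies U* > 0, V* > 0, P* − x₀U* > 0. -/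
/-- The disease equilibrium of the reduced prion ODE system: it is a zero of the
vector field and lies in the interior of the invariant region. -/
theorem disease_equilibrium
    (x₀ β γ lam μ τ : ℝ)
    (hx₀ : 0 < x₀) (hβ : 0 < β) (hγ : 0 < γ) (hlam : 0 < lam) (hμ : 0 < μ) (hτ : 0 < τ)
    (hthr : lam * β * τ / γ > (μ + β * x₀) ^ 2) :
    let U := (lam * β * τ - γ * (μ + β * x₀) ^ 2) / (μ * τ * (μ + 2 * β * x₀))
    let V := (μ + β * x₀) ^ 2 / (β * τ)
    let P := (lam * β * τ - γ * (μ + β * x₀) ^ 2) / (β * μ * τ)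
    β * P - μ * U - 2 * β * x₀ * U = 0 ∧
    lam - γ * V - τ * U * V + β * x₀ ^ 2 * U = 0 ∧
    τ * U * V - μ * P - β * x₀ ^ 2 * U = 0 ∧
    0 < U ∧ 0 < V ∧ 0 < P - x₀ * U := by
  intro U V P
  have hN : 0 < lam * β * τ - γ * (μ + β * x₀) ^ 2 := by
    have := (lt_div_iff₀ hγ).mp hthr
    nlinarith
  have hs : 0 < μ + β * x₀ := by positivity
  have hs2 : 0 < μ + 2 * β * x₀ := by positivity
  have hβτ : (β : ℝ) * τ ≠ 0 := by positivity
  refine ⟨?_, ?_, ?_, ?_, ?_, ?_⟩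
  · show β * P - μ * U - 2 * β * x₀ * U = 0
    simp only [U, P]
    field_simp
    ring
  · show lam - γ * V - τ * U * V + β * x₀ ^ 2 * U = 0
    simp only [U, V]
    field_simp
    ring
  · show τ * U * V - μ * P - β * x₀ ^ 2 * U = 0
    simp only [U, V, P]
    field_simp
    ring
  · show 0 < U; exact div_pos hN (by positivity)
  · show 0 < V; positivity
  · show 0 < P - x₀ * U
    have : P - x₀ * U = (lam * β * τ - γ * (μ + β * x₀) ^ 2) * (μ + β * x₀) /
        (β * μ * τ * (μ + 2 * β * x₀)) := by
      simp only [U, P]; field_simp; ring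
    rw [this]; positivity
end

section
/- Let x₀, β, γ, λ, μ, τ > 0 with λβτ/γ ≤ (μ + βx₀)². Then (0, λ/γ, 0) is the only equilibrium of the system U' = βP − μU − 2βx₀U, V' = λ − γV − τUV + βx₀²U, P' = τUV − μP − βx₀²U in the region K = {(U,V,P) : U ≥ 0, V ≥ 0, P − x₀U ≥ 0}. -/
/-- Below or at threshold, the disease-free equilibrium (0, λ/γ, 0) is the only
equilibrium of the reduced prion ODE system in the region K. -/
theorem disease_free_unique_equilibrium
    (x₀ β γ lam μ τ : ℝ)
    (hx₀ : 0 < x₀) (hβ : 0 < β) (hγ : 0 < γ) (hlam : 0 < lam) (hμ : 0 < μ) (hτ : 0 < τ)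
    (hthr : lam * β * τ / γ ≤ (μ + β * x₀) ^ 2)
    (U V P : ℝ) (hU : 0 ≤ U) (hV : 0 ≤ V) (hP : 0 ≤ P - x₀ * U)
    (h1 : β * P - μ * U - 2 * β * x₀ * U = 0)
    (h2 : lam - γ * V - τ * U * V + β * x₀ ^ 2 * U = 0)
    (h3 : τ * U * V - μ * P - β * x₀ ^ 2 * U = 0) :
    U = 0 ∧ V = lam / γ ∧ P = 0 := by
  have hthr' : lam * β * τ ≤ γ * (μ + β * x₀) ^ 2 := by
    rw [div_le_iff₀ hγ] at hthr; linarith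
  have hU0 : U = 0 := by
    by_contra h
    have hUpos : 0 < U := lt_of_le_of_ne hU (Ne.symm h)
    have key : β * (τ * U * V) = (μ + β * x₀) ^ 2 * U := by
      linear_combination β * h3 + μ * h1
    -- γ V < lam, but lam ≤ γ V
    have hVlt : β * (γ * V) < β * lam := by
      nlinarith [key, mul_pos (mul_pos hμ hμ) hUpos, mul_pos (mul_pos hμ (mul_pos hβ hx₀)) hUpos]
    have hVge : lam * (τ * U) ≤ γ * V * (τ * U) := by
      nlinarith [mul_le_mul_of_nonneg_right hthr' hU]
    have : lam ≤ γ * V := by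
      have hτU : 0 < τ * U := mul_pos hτ hUpos
      exact le_of_mul_le_mul_right hVge hτU
    nlinarith
  subst hU0
  refine ⟨rfl, ?_, ?_⟩
  · field_simp
    linarith [h2]
  · have : β * P = 0 := by linarith
    exact by nlinarith [this]
end

section
/- Let ω, μ₀, β, λ > 0. For f ∈ L₁(ℝ₊) the function u(x) = (1/ω)∫₀ˣ exp(−[(λ+μ₀)(x−y)/ω + β(x²−y²)/(2ω)]) f(y) dy satisfies the ODE λu(x) + ωu'(x) + (μ₀+βx)u(x) = f(x) for a.e. x > 0, with u(0) = 0, and ‖u‖_{L₁} ≤ ‖f‖_{L₁}/(λ+μ₀). -/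
open MeasureTheory

/-!
With `Φ(t) = ((λ + μ₀) t + β t² / 2) / ω` the kernel is `e^{Φ(y) - Φ(x)}`, so
`u = (1/ω) e^{-Φ} ∫₀ˣ e^{Φ} f` is the variation-of-constants solution; the Lebesgue
differentiation theorem for the primitive of `e^{Φ} f` gives the equation almost everywhere.
For `0 ≤ y ≤ x` one has `Φ(x) - Φ(y) ≥ (λ + μ₀)(x - y) / ω`, so `ω |u|` is dominated by the
convolution of `|f|` with `k(t) = e^{-(λ + μ₀) t / ω} 1_{t ≥ 0}`, and `∫ (|f| ⋆ k) = ‖f‖₁ ∫ k`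
with `∫ k = ω / (λ + μ₀)`.
-/

open Set Filter Real
open scoped Topology Convolution

theorem MeasureTheory.LocallyIntegrable.ae_hasDerivAt_integral_exp_sub_mul {Φ Φ' g : ℝ → ℝ}
    (hg : LocallyIntegrable g volume) (hΦ : ∀ x, HasDerivAt Φ (Φ' x) x) (c : ℝ) :
    ∀ᵐ x, HasDerivAt (fun x => ∫ y in c..x, exp (Φ y - Φ x) * g y)
      (g x - Φ' x * ∫ y in c..x, exp (Φ y - Φ x) * g y) x := by
  have hΦc : Continuous Φ := continuous_iff_continuousAt.2 fun x => (hΦ x).continuousAt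
  have hint : LocallyIntegrable (fun y => exp (Φ y) * g y) volume :=
    hg.continuous_mul (continuous_exp.comp hΦc)
  have hsplit (x : ℝ) : ∫ y in c..x, exp (Φ y - Φ x) * g y
      = exp (-Φ x) * ∫ y in c..x, exp (Φ y) * g y := by
    rw [← intervalIntegral.integral_const_mul]
    congr 1 with y
    rw [sub_eq_add_neg, exp_add]
    ring
  simp only [hsplit]
  filter_upwards [LocallyIntegrable.ae_hasDerivAt_integral hint] with x hx
  refine (((hΦ x).neg.exp).mul (hx c)).congr_deriv ?_
  rw [Pi.neg_apply, ← mul_assoc, ← exp_add, neg_add_cancel, exp_zero]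
  ring

theorem MeasureTheory.IntegrableOn.ae_hasDerivAt_integral_exp_sub_mul {Φ Φ' f : ℝ → ℝ} {c : ℝ}
    (hf : IntegrableOn f (Ioi c)) (hΦ : ∀ x, HasDerivAt Φ (Φ' x) x) :
    ∀ᵐ x ∂(volume.restrict (Ioi c)), HasDerivAt (fun x => ∫ y in c..x, exp (Φ y - Φ x) * f y)
      (f x - Φ' x * ∫ y in c..x, exp (Φ y - Φ x) * f y) x := by
  set f₀ := (Ioi c).indicator f
  have hf₀ : LocallyIntegrable f₀ volume :=
    ((integrable_indicator_iff measurableSet_Ioi).2 hf).locallyIntegrable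
  have hf₀_eq {x : ℝ} (hx : c < x) :
      ∫ y in c..x, exp (Φ y - Φ x) * f₀ y = ∫ y in c..x, exp (Φ y - Φ x) * f y := by
    refine intervalIntegral.integral_congr_ae (.of_forall fun y hy => ?_)
    rw [uIoc_of_le hx.le] at hy
    rw [show f₀ y = f y from indicator_of_mem hy.1 _]
  filter_upwards [ae_restrict_of_ae (hf₀.ae_hasDerivAt_integral_exp_sub_mul hΦ c),
    ae_restrict_mem measurableSet_Ioi] with x hx (hcx : c < x)
  have hloc : (fun x => ∫ y in c..x, exp (Φ y - Φ x) * f₀ y) =ᶠ[𝓝 x]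
      fun x => ∫ y in c..x, exp (Φ y - Φ x) * f y :=
    eventually_of_mem (Ioi_mem_nhds hcx) fun z hz => hf₀_eq hz
  rw [← hf₀_eq hcx, ← show f₀ x = f x from indicator_of_mem hcx _]
  exact hx.congr_of_eventuallyEq hloc.symm

theorem integral_abs_volterra_le {K : ℝ → ℝ → ℝ} {k f : ℝ → ℝ} (hk : Integrable k)
    (hk0 : ∀ t, 0 ≤ k t) (hf : IntegrableOn f (Ioi 0))
    (hK : ∀ x y, 0 < y → y ≤ x → |K x y| ≤ k (x - y)) :
    ∫ x in Ioi 0, |∫ y in 0..x, K x y * f y| ≤ (∫ t, k t) * ∫ x in Ioi 0, |f x| := by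
  set F := (Ioi (0:ℝ)).indicator fun y => |f y|
  have hF : Integrable F := (integrable_indicator_iff measurableSet_Ioi).2 hf.abs
  have hF0 : ∀ y, 0 ≤ F y := indicator_nonneg fun _ _ => abs_nonneg _
  set L : ℝ →L[ℝ] ℝ →L[ℝ] ℝ := ContinuousLinearMap.lsmul ℝ ℝ
  set w := F ⋆[L] k
  have hw : Integrable w := hF.integrable_convolution L hk
  have hw0 : ∀ x, 0 ≤ w x := fun x => integral_nonneg fun y => mul_nonneg (hF0 y) (hk0 _)
  have hw_bound : ∀ᵐ x : ℝ, x ∈ Ioi 0 → |∫ y in 0..x, K x y * f y| ≤ w x := by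
    filter_upwards [hF.ae_convolution_exists L hk] with x hx hx0
    have hint : Integrable (fun y => F y * k (x - y)) := hx
    calc |∫ y in 0..x, K x y * f y| ≤ ∫ y in 0..x, F y * k (x - y) := by
          rw [← Real.norm_eq_abs]
          refine intervalIntegral.norm_integral_le_of_norm_le (le_of_lt hx0)
            (.of_forall fun y hy => ?_) hint.intervalIntegrable
          rw [Real.norm_eq_abs, abs_mul, show F y = |f y| from indicator_of_mem hy.1 _, mul_comm]
          exact mul_le_mul_of_nonneg_left (hK x y hy.1 hy.2) (abs_nonneg _)
      _ ≤ ∫ y, F y * k (x - y) := by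
          rw [intervalIntegral.integral_of_le (le_of_lt hx0)]
          exact setIntegral_le_integral hint (.of_forall fun y => mul_nonneg (hF0 y) (hk0 _))
  calc ∫ x in Ioi 0, |∫ y in 0..x, K x y * f y|
      ≤ ∫ x in Ioi 0, w x :=
        integral_mono_of_nonneg (.of_forall fun _ => abs_nonneg _) hw.integrableOn
          ((ae_restrict_iff' measurableSet_Ioi).2 hw_bound)
    _ ≤ ∫ x, w x := setIntegral_le_integral hw (.of_forall hw0)
    _ = (∫ t, k t) * ∫ x in Ioi 0, |f x| := by
        rw [integral_convolution L hF hk, MeasureTheory.integral_indicator measurableSet_Ioi,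
          ContinuousLinearMap.lsmul_apply, smul_eq_mul, mul_comm]

noncomputable def expKernel (a : ℝ) : ℝ → ℝ :=
  (Ici 0).indicator fun t => exp (-a * t)

theorem expKernel_nonneg (a t : ℝ) : 0 ≤ expKernel a t :=
  indicator_nonneg (fun _ _ => (exp_pos _).le) t

theorem expKernel_of_nonneg (a : ℝ) {t : ℝ} (ht : 0 ≤ t) : expKernel a t = exp (-a * t) :=
  indicator_of_mem (mem_Ici.2 ht) _

theorem integrable_expKernel {a : ℝ} (ha : 0 < a) : Integrable (expKernel a) :=
  (integrable_indicator_iff measurableSet_Ici).2 <|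
    (integrableOn_Ici_iff_integrableOn_Ioi).2 (exp_neg_integrableOn_Ioi 0 ha)

theorem integral_expKernel {a : ℝ} (ha : 0 < a) : ∫ t, expKernel a t = 1 / a := by
  rw [expKernel, MeasureTheory.integral_indicator measurableSet_Ici,
    integral_Ici_eq_integral_Ioi, integral_exp_mul_Ioi (neg_neg_iff_pos.2 ha)]
  simp [neg_div]

/-- `Φ(t) = ∫₀ᵗ (c + β s) / ω ds`: `e^{-Φ}` is the integrating factor of `ω u' + (c + β x) u`. -/
noncomputable def transportPhase (c β ω t : ℝ) : ℝ :=
  (c * t + β / 2 * t ^ 2) / ω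

theorem hasDerivAt_transportPhase (c β ω x : ℝ) :
    HasDerivAt (transportPhase c β ω) ((c + β * x) / ω) x := by
  refine ((((hasDerivAt_id' x).const_mul c).add
    ((hasDerivAt_pow 2 x).const_mul (β / 2))).div_const ω).congr_deriv ?_
  norm_num
  ring

theorem transportPhase_sub_transportPhase (c β ω x y : ℝ) :
    transportPhase c β ω y - transportPhase c β ω x
      = -(c * (x - y) / ω + β * (x ^ 2 - y ^ 2) / (2 * ω)) := by
  simp only [transportPhase]
  ring

theorem transportPhase_sub_transportPhase_le {c β ω x y : ℝ} (hβ : 0 ≤ β) (hω : 0 ≤ ω)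
    (hy : 0 ≤ y) (hyx : y ≤ x) :
    transportPhase c β ω y - transportPhase c β ω x ≤ -(c / ω) * (x - y) := by
  have hsq : 0 ≤ β / 2 * (x ^ 2 - y ^ 2) / ω :=
    div_nonneg (mul_nonneg (by positivity) (by nlinarith)) hω
  calc transportPhase c β ω y - transportPhase c β ω x
      = -(c / ω) * (x - y) - β / 2 * (x ^ 2 - y ^ 2) / ω := by
        simp only [transportPhase]
        ring
    _ ≤ -(c / ω) * (x - y) := sub_le_self _ hsq

/-- Explicit resolvent formula for the transport operator: the function
u(x) = (1/ω)∫₀ˣ exp(−[(λ+μ₀)(x−y)/ω + β(x²−y²)/(2ω)]) f(y) dy satisfies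
λu + ωu' + (μ₀+βx)u = f a.e. on (0,∞), u(0) = 0, and ‖u‖₁ ≤ ‖f‖₁/(λ+μ₀). -/
theorem resolvent_formula
    (ω μ₀ β lam : ℝ) (hω : 0 < ω) (hμ₀ : 0 < μ₀) (hβ : 0 < β) (hlam : 0 < lam)
    (f : ℝ → ℝ) (hf : IntegrableOn f (Set.Ioi 0))
    (u : ℝ → ℝ)
    (hu : ∀ x, u x = (1 / ω) * ∫ y in (0:ℝ)..x,
      Real.exp (-((lam + μ₀) * (x - y) / ω + β * (x ^ 2 - y ^ 2) / (2 * ω))) * f y) :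
    u 0 = 0 ∧
    (∀ᵐ x ∂(volume.restrict (Set.Ioi (0:ℝ))),
      lam * u x + ω * deriv u x + (μ₀ + β * x) * u x = f x) ∧
    ∫ x in Set.Ioi (0:ℝ), |u x| ≤ (∫ x in Set.Ioi (0:ℝ), |f x|) / (lam + μ₀) := by
  set Φ := transportPhase (lam + μ₀) β ω
  have hu' : u = fun x => 1 / ω * ∫ y in (0:ℝ)..x, exp (Φ y - Φ x) * f y := by
    funext x
    simp only [hu x, Φ, transportPhase_sub_transportPhase]
  refine ⟨by simp [hu'], ?_, ?_⟩
  · filter_upwards [hf.ae_hasDerivAt_integral_exp_sub_mul (hasDerivAt_transportPhase _ β ω)]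
      with x hx
    rw [hu', (hx.const_mul (1 / ω)).deriv]
    field_simp
    ring
  · have ha : 0 < (lam + μ₀) / ω := by positivity
    have hK (x y : ℝ) (hy : 0 < y) (hyx : y ≤ x) :
        |exp (Φ y - Φ x)| ≤ expKernel ((lam + μ₀) / ω) (x - y) := by
      rw [abs_of_pos (exp_pos _), expKernel_of_nonneg _ (sub_nonneg.2 hyx)]
      exact exp_le_exp.2 (transportPhase_sub_transportPhase_le hβ.le hω.le hy.le hyx)
    calc ∫ x in Ioi 0, |u x|
        = 1 / ω * ∫ x in Ioi 0, |∫ y in (0:ℝ)..x, exp (Φ y - Φ x) * f y| := by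
          simp only [hu', abs_mul, abs_of_pos (one_div_pos.2 hω)]
          exact integral_const_mul _ _
      _ ≤ 1 / ω * ((∫ t, expKernel ((lam + μ₀) / ω) t) * ∫ x in Ioi 0, |f x|) := by
          gcongr
          exact integral_abs_volterra_le (integrable_expKernel ha) (expKernel_nonneg _) hf hK
      _ = (∫ x in Ioi 0, |f x|) / (lam + μ₀) := by
          rw [integral_expKernel ha]
          field_simp
end

section
/- Let ω, μ₀, β, λ > 0 and define k_λ(x) = (2β/ω)∫₀ˣ exp(−(λ+μ₀)(x−y)/ω − β(x²−y²)/(2ω)) dy. Then for all x ≥ 0: 2βx/(ω + (λ+μ₀+βx)x) ≤ k_λ(x) ≤ 2β/(λ+μ₀). -/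
/-! For `0 ≤ y ≤ x` we have `0 ≤ x² - y² ≤ 2x(x - y)`, so the integrand is squeezed between
two exponentials linear in `x - y`, whose integrals are explicit. The upper one is at most the
reciprocal of its rate; the lower one is bounded below using `1 - e^(-s) ≥ s / (1 + s)`. -/

open Real intervalIntegral

theorem div_one_add_le_one_sub_exp_neg {s : ℝ} (hs : 0 ≤ s) : s / (1 + s) ≤ 1 - exp (-s) := by
  have hpos : 0 < 1 + s := by linarith
  have h : exp (-s) ≤ (1 + s)⁻¹ := by
    rw [exp_neg]
    exact inv_anti₀ hpos (by linarith [add_one_le_exp s])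
  calc s / (1 + s) = 1 - (1 + s)⁻¹ := by field_simp; ring
    _ ≤ 1 - exp (-s) := by linarith

theorem integral_exp_neg_mul_sub {a : ℝ} (ha : a ≠ 0) (x : ℝ) :
    ∫ y in (0:ℝ)..x, exp (-(a * (x - y))) = (1 - exp (-(a * x))) / a := by
  have h (y : ℝ) : exp (-(a * (x - y))) = exp (-(a * x)) * exp (a * y) := by
    rw [← exp_add]; ring_nf
  simp_rw [h]
  rw [integral_const_mul, integral_comp_mul_left (fun t => exp t) ha, integral_exp, exp_neg]
  simp only [mul_zero, exp_zero, smul_eq_mul]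
  field_simp

theorem integral_exp_neg_mul_sub_le_inv {a x : ℝ} (ha : 0 < a) :
    ∫ y in (0:ℝ)..x, exp (-(a * (x - y))) ≤ a⁻¹ := by
  rw [integral_exp_neg_mul_sub ha.ne', div_eq_mul_inv]
  exact mul_le_of_le_one_left (inv_nonneg.2 ha.le) (by linarith [exp_pos (-(a * x))])

theorem div_one_add_mul_le_integral_exp_neg_mul_sub {a x : ℝ} (ha : 0 < a) (hx : 0 ≤ x) :
    x / (1 + a * x) ≤ ∫ y in (0:ℝ)..x, exp (-(a * (x - y))) := by
  rw [integral_exp_neg_mul_sub ha.ne']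
  calc x / (1 + a * x) = a * x / (1 + a * x) / a := by field_simp
    _ ≤ (1 - exp (-(a * x))) / a := by
      gcongr; exact div_one_add_le_one_sub_exp_neg (by positivity)

section QuadraticExponent

variable {c b x : ℝ}

theorem integral_exp_neg_quadratic_le_inv (hc : 0 < c) (hb : 0 ≤ b) (hx : 0 ≤ x) :
    ∫ y in (0:ℝ)..x, exp (-(c * (x - y)) - b * (x ^ 2 - y ^ 2)) ≤ c⁻¹ := by
  refine le_trans ?_ (integral_exp_neg_mul_sub_le_inv (x := x) hc)
  refine integral_mono_on hx ((by fun_prop : Continuous _).intervalIntegrable _ _)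
    ((by fun_prop : Continuous _).intervalIntegrable _ _) fun y hy => exp_le_exp.2 ?_
  have : 0 ≤ b * ((x - y) * (x + y)) :=
    mul_nonneg hb (mul_nonneg (by linarith [hy.2]) (by linarith [hy.1]))
  nlinarith

theorem div_one_add_le_integral_exp_neg_quadratic (hc : 0 < c) (hb : 0 ≤ b) (hx : 0 ≤ x) :
    x / (1 + (c + 2 * b * x) * x) ≤
      ∫ y in (0:ℝ)..x, exp (-(c * (x - y)) - b * (x ^ 2 - y ^ 2)) := by
  refine (div_one_add_mul_le_integral_exp_neg_mul_sub (by positivity) hx).trans ?_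
  refine integral_mono_on hx ((by fun_prop : Continuous _).intervalIntegrable _ _)
    ((by fun_prop : Continuous _).intervalIntegrable _ _) fun y _ => exp_le_exp.2 ?_
  nlinarith [mul_nonneg hb (sq_nonneg (x - y))]

end QuadraticExponent

/-- Two-sided bound for the kernel k_λ appearing in the resolvent representation:
2βx/(ω + (λ+μ₀+βx)x) ≤ k_λ(x) ≤ 2β/(λ+μ₀) for all x ≥ 0. -/
theorem kernel_k_bounds
    (ω μ₀ β lam : ℝ) (hω : 0 < ω) (hμ₀ : 0 < μ₀) (hβ : 0 < β) (hlam : 0 < lam)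
    (k : ℝ → ℝ)
    (hk : ∀ x, k x = (2 * β / ω) * ∫ y in (0:ℝ)..x,
      Real.exp (-(lam + μ₀) * (x - y) / ω - β * (x ^ 2 - y ^ 2) / (2 * ω))) :
    ∀ x ≥ 0, 2 * β * x / (ω + (lam + μ₀ + β * x) * x) ≤ k x ∧
      k x ≤ 2 * β / (lam + μ₀) := by
  intro x hx
  have hL : 0 < lam + μ₀ := by positivity
  have hc : 0 < (lam + μ₀) / ω := by positivity
  have hb : 0 ≤ β / (2 * ω) := by positivity
  have hk' : k x = 2 * β / ω * ∫ y in (0:ℝ)..x,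
      exp (-((lam + μ₀) / ω * (x - y)) - β / (2 * ω) * (x ^ 2 - y ^ 2)) := by
    rw [hk]; congr 1; refine integral_congr fun y _ => ?_; ring_nf
  rw [hk']
  constructor
  · calc 2 * β * x / (ω + (lam + μ₀ + β * x) * x)
        = 2 * β / ω * (x / (1 + ((lam + μ₀) / ω + 2 * (β / (2 * ω)) * x) * x)) := by
          field_simp
      _ ≤ _ := by gcongr; exact div_one_add_le_integral_exp_neg_quadratic hc hb hx
  · calc _ ≤ 2 * β / ω * ((lam + μ₀) / ω)⁻¹ := by
          gcongr; exact integral_exp_neg_quadratic_le_inv hc hb hx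
      _ = 2 * β / (lam + μ₀) := by field_simp
end

section
/- Let ω, μ₀, β, λ > 0 and k(x) = 2βx/(ω + (λ+μ₀+βx)x). Then for all 0 ≤ y ≤ x, ∫_y^x k(r) dr ≥ log((ω + (λ+μ₀)x + βx²)/(ω + (λ+μ₀)y + βy²)) − c, where c = (λ+μ₀)·∫₀^∞ dr/(ω + (λ+μ₀)r + βr²) < ∞. -/
open MeasureTheory

/-- Lower bound for ∫_y^x k(r)dr with k(r) = 2βr/(ω + (λ+μ₀+βr)r), in terms of a
logarithm minus a finite correction constant. -/
theorem kernel_integral_log_bound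
    (ω μ₀ β lam : ℝ) (hω : 0 < ω) (hμ₀ : 0 < μ₀) (hβ : 0 < β) (hlam : 0 < lam)
    (k : ℝ → ℝ)
    (hk : ∀ r, k r = 2 * β * r / (ω + (lam + μ₀ + β * r) * r)) :
    IntegrableOn (fun r => 1 / (ω + (lam + μ₀) * r + β * r ^ 2)) (Set.Ioi 0) ∧
    ∀ y x : ℝ, 0 ≤ y → y ≤ x →
      ∫ r in y..x, k r ≥
        Real.log ((ω + (lam + μ₀) * x + β * x ^ 2) / (ω + (lam + μ₀) * y + β * y ^ 2))
        - (lam + μ₀) * ∫ r in Set.Ioi (0:ℝ), 1 / (ω + (lam + μ₀) * r + β * r ^ 2) := by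
  set c : ℝ := lam + μ₀ with hcdef
  have hc : 0 < c := by positivity
  set Q : ℝ → ℝ := fun r => ω + c * r + β * r ^ 2 with hQdef
  have hQpos : ∀ r : ℝ, 0 ≤ r → 0 < Q r := by
    intro r hr
    have : 0 ≤ c * r := mul_nonneg hc.le hr
    have : 0 ≤ β * r ^ 2 := by positivity
    simp only [hQdef]
    nlinarith
  -- continuity of Q
  have hQcont : Continuous Q := by fun_prop
  -- Integrability
  have hInt : IntegrableOn (fun r => 1 / Q r) (Set.Ioi 0) := by
    have hsplit : Set.Ioi (0:ℝ) = Set.Ioc 0 1 ∪ Set.Ioi 1 := by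
      rw [Set.Ioc_union_Ioi_eq_Ioi]; norm_num
    rw [hsplit]
    apply IntegrableOn.union
    · -- on Ioc 0 1
      apply IntegrableOn.mono_set (t := Set.Icc (0:ℝ) 1) _ Set.Ioc_subset_Icc_self
      apply ContinuousOn.integrableOn_compact isCompact_Icc
      apply ContinuousOn.div continuousOn_const hQcont.continuousOn
      intro r hr
      exact (hQpos r hr.1).ne'
    · -- on Ioi 1
      have hg : IntegrableOn (fun r : ℝ => β⁻¹ * r ^ (-2 : ℝ)) (Set.Ioi 1) :=
        (integrableOn_Ioi_rpow_of_lt (by norm_num) one_pos).const_mul _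
      apply Integrable.mono' hg
      · apply ContinuousOn.aestronglyMeasurable _ measurableSet_Ioi
        apply ContinuousOn.div continuousOn_const hQcont.continuousOn
        intro r hr
        exact (hQpos r (by linarith [Set.mem_Ioi.mp hr])).ne'
      · rw [ae_restrict_iff' measurableSet_Ioi]
        filter_upwards with r hr
        have hr1 : (1:ℝ) < r := hr
        have hr0 : (0:ℝ) < r := by linarith
        have hQr : 0 < Q r := hQpos r hr0.le
        have hrp : r ^ (-2 : ℝ) = 1 / r ^ 2 := by
          rw [Real.rpow_neg hr0.le, Real.rpow_two]; simp
        have hb : 0 < β * r ^ 2 := by positivity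
        have hQge : β * r ^ 2 ≤ Q r := by
          simp only [hQdef]; nlinarith
        rw [Real.norm_eq_abs, abs_of_nonneg (by positivity)]
        calc 1 / Q r ≤ 1 / (β * r ^ 2) := one_div_le_one_div_of_le hb hQge
          _ = β⁻¹ * r ^ (-2 : ℝ) := by rw [hrp]; field_simp
  refine ⟨hInt, ?_⟩
  intro y x hy hyx
  have hQx : 0 < Q x := hQpos x (le_trans hy hyx)
  have hQy : 0 < Q y := hQpos y hy
  have hQne : ∀ r ∈ Set.uIcc y x, Q r ≠ 0 := by
    intro r hr
    rw [Set.uIcc_of_le hyx] at hr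
    exact (hQpos r (le_trans hy hr.1)).ne'
  -- derivative
  have hderiv : ∀ r ∈ Set.uIcc y x,
      HasDerivAt (fun s => Real.log (Q s)) ((c + 2 * β * r) / Q r) r := by
    intro r hr
    have hQd : HasDerivAt Q (c + 2 * β * r) r := by
      have h1 : HasDerivAt (fun s : ℝ => ω + c * s + β * s ^ 2)
          (0 + c * 1 + β * (2 * r ^ 1)) r :=
        (((hasDerivAt_const r ω).add ((hasDerivAt_id r).const_mul c)).add
          ((hasDerivAt_pow 2 r).const_mul β))
      convert h1 using 1
      ring
    exact hQd.log (hQne r hr)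
  -- interval integrability of 1/Q and (c+2βr)/Q
  have hcontQinv : ContinuousOn (fun r => 1 / Q r) (Set.uIcc y x) :=
    ContinuousOn.div continuousOn_const hQcont.continuousOn hQne
  have hii1 : IntervalIntegrable (fun r => 1 / Q r) volume y x :=
    hcontQinv.intervalIntegrable
  have hii2 : IntervalIntegrable (fun r => (c + 2 * β * r) / Q r) volume y x := by
    apply ContinuousOn.intervalIntegrable
    exact ContinuousOn.div (by fun_prop) hQcont.continuousOn hQne
  -- FTC
  have hFTC : ∫ r in y..x, (c + 2 * β * r) / Q r
      = Real.log (Q x) - Real.log (Q y) :=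
    intervalIntegral.integral_eq_sub_of_hasDerivAt (fun r hr => hderiv r hr) hii2
  -- rewrite k
  have hkeq : ∀ r ∈ Set.uIcc y x,
      k r = (c + 2 * β * r) / Q r - c * (1 / Q r) := by
    intro r hr
    rw [hk r]
    have h1 : ω + (lam + μ₀ + β * r) * r = Q r := by simp only [hQdef, hcdef]; ring
    rw [h1, mul_one_div, ← sub_div]
    ring_nf
  have hintk : ∫ r in y..x, k r
      = (Real.log (Q x) - Real.log (Q y)) - c * ∫ r in y..x, 1 / Q r := by
    rw [intervalIntegral.integral_congr hkeq,
      intervalIntegral.integral_sub hii2 (hii1.const_mul c),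
      intervalIntegral.integral_const_mul, hFTC]
  -- compare interval integral with integral over Ioi 0
  have hmono : ∫ r in y..x, 1 / Q r ≤ ∫ r in Set.Ioi (0:ℝ), 1 / Q r := by
    rw [intervalIntegral.integral_of_le hyx]
    apply setIntegral_mono_set hInt
    · filter_upwards [ae_restrict_mem measurableSet_Ioi] with r hr
      simp only [Pi.zero_apply]
      exact le_of_lt (one_div_pos.mpr (hQpos r (le_of_lt hr)))
    · apply HasSubset.Subset.eventuallyLE
      intro r hr
      exact lt_of_le_of_lt hy hr.1
  have hlog : Real.log (Q x / Q y) = Real.log (Q x) - Real.log (Q y) :=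
    Real.log_div hQx.ne' hQy.ne'
  rw [ge_iff_le, hintk]
  have : Real.log ((ω + (lam + μ₀) * x + β * x ^ 2) / (ω + (lam + μ₀) * y + β * y ^ 2))
      = Real.log (Q x / Q y) := by simp only [hQdef, hcdef]
  rw [this, hlog]
  have hmul : c * ∫ r in y..x, 1 / Q r ≤ c * ∫ r in Set.Ioi (0:ℝ), 1 / Q r :=
    mul_le_mul_of_nonneg_left hmono hc.le
  simp only [hQdef, hcdef] at hmul ⊢
  linarith
end
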